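/- arXiv:2002.06663 — 2 statements merged into one kernel-verified Lean document; each statement's English description precedes it below -/
import Mathlib

section
/- Fix K ≥ 1 existing cluster labels 1, …, K, positive reals n₁, …, n_K (cluster sizes), γ > 0, λ ≥ 0, V > 0 and Z_H > 0, nonnegative integers m₁, …, m_K (the number of neighbors of observation i currently assigned to each label), and a measure G₀ on the label space assigning zero mass to {1, …, K}. Define H(c) = −λ·m_c for c ∈ {1, …, K} and H(c) = 0 otherwise. Then the measure obtained from Σ_{c=1}^K (n_c + γ)·δ_c + V·γ·G₀ by multiplying with the density c ↦ exp(−H(c))/Z_H equals Σ_{c=1}^K (n_c + γ)·(exp(λ·m_c)/Z_H)·δ_c + (V·γ/Z_H)·G₀. In particular, the MRFC-MFM full conditional of the cluster label z_i is proportional to (n_c + γ)·exp(λ·Σ_{l∈∂(i)} 1(z_l = c)) for an existing label c and to γ·V_n(K*+1)/V_n(K*) for a new label. (Corollary 1.) -/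
open MeasureTheory ENNReal

namespace MeasureTheory

variable {α : Type*} [MeasurableSpace α]

lemma withDensity_finset_sum {ι : Type*} (s : Finset ι) (μ : ι → Measure α) (f : α → ℝ≥0∞) :
    (∑ i ∈ s, μ i).withDensity f = ∑ i ∈ s, (μ i).withDensity f :=
  map_sum
    ({ toFun := fun ν => ν.withDensity f
       map_zero' := withDensity_zero_left f
       map_add' := fun ν ν' => withDensity_add_measure ν ν' f } : Measure α →+ Measure α) μ s

lemma withDensity_eq_smul_of_eq_const_off_null {μ : Measure α} {f : α → ℝ≥0∞} {c : ℝ≥0∞}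
    {s : Set α} (hs : μ s = 0) (hf : ∀ x ∉ s, f x = c) : μ.withDensity f = c • μ := by
  rw [← withDensity_const]
  refine withDensity_congr_ae ?_
  filter_upwards [measure_eq_zero_iff_ae_notMem.1 hs] with x hx using hf x hx

end MeasureTheory

theorem mrfc_mfm_polya_urn_general
    (K : ℕ)
    (n : ℕ → ℝ)
    (γ lam V ZH : ℝ) (hZ : 0 < ZH)
    (m : ℕ → ℕ)
    (G₀ : Measure ℕ) (hG₀ : G₀ ((Finset.Icc 1 K : Finset ℕ) : Set ℕ) = 0)
    (H : ℕ → ℝ)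
    (hH : ∀ c, H c = if c ∈ Finset.Icc 1 K then -(lam * (m c : ℝ)) else 0) :
    ((∑ c ∈ Finset.Icc 1 K, ENNReal.ofReal (n c + γ) • Measure.dirac c)
        + ENNReal.ofReal (V * γ) • G₀).withDensity
        (fun c => ENNReal.ofReal (Real.exp (-H c) / ZH))
      = (∑ c ∈ Finset.Icc 1 K,
          ENNReal.ofReal ((n c + γ) * (Real.exp (lam * (m c : ℝ)) / ZH)) •
            Measure.dirac c)
        + ENNReal.ofReal (V * γ / ZH) • G₀ := by
  have h_new : ∀ c ∉ ((Finset.Icc 1 K : Finset ℕ) : Set ℕ),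
      ENNReal.ofReal (Real.exp (-H c) / ZH) = ENNReal.ofReal (1 / ZH) := by
    intro c hc
    rw [hH c, if_neg (Finset.mem_coe.not.1 hc), neg_zero, Real.exp_zero]
  rw [withDensity_add_measure, withDensity_finset_sum, withDensity_smul_measure,
    withDensity_eq_smul_of_eq_const_off_null hG₀ h_new, smul_smul,
    ← ofReal_mul' (by positivity), mul_one_div]
  congr 1
  refine Finset.sum_congr rfl fun c hc => ?_
  rw [withDensity_smul_measure, dirac_withDensity, smul_smul, hH c, if_pos hc, neg_neg,
    ← ofReal_mul' (by positivity)]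

/-- Corollary 1 (MRFC-MFM Pólya urn scheme): with existing labels `1, …, K`,
cluster sizes `n c > 0`, neighbor counts `m c`, spatial smoothness `λ ≥ 0`,
MFM new-table factor `V > 0` and MRF normalizing constant `Z_H > 0`, and the
MRF cost `H c = -λ * m c` for `c ∈ {1, …, K}` and `H c = 0` otherwise,
multiplying `∑ c, (n c + γ) • δ_c + V·γ • G₀` by the density
`c ↦ exp (-H c) / Z_H` gives
`∑ c, (n c + γ) * exp (λ * m c) / Z_H • δ_c + (V·γ / Z_H) • G₀`; in particular
the full conditional of `z_i` is proportional to `(n c + γ) * exp (λ * m c)`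
at an existing label `c` and to `V·γ` at a new label. -/
theorem mrfc_mfm_polya_urn
    (K : ℕ) (hK : 1 ≤ K)
    (n : ℕ → ℝ) (hn : ∀ c ∈ Finset.Icc 1 K, 0 < n c)
    (γ lam V ZH : ℝ) (hγ : 0 < γ) (hlam : 0 ≤ lam) (hV : 0 < V) (hZ : 0 < ZH)
    (m : ℕ → ℕ)
    (G₀ : Measure ℕ) (hG₀ : G₀ ((Finset.Icc 1 K : Finset ℕ) : Set ℕ) = 0)
    (H : ℕ → ℝ)
    (hH : ∀ c, H c = if c ∈ Finset.Icc 1 K then -(lam * (m c : ℝ)) else 0) :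
    ((∑ c ∈ Finset.Icc 1 K, ENNReal.ofReal (n c + γ) • Measure.dirac c)
        + ENNReal.ofReal (V * γ) • G₀).withDensity
        (fun c => ENNReal.ofReal (Real.exp (-H c) / ZH))
      = (∑ c ∈ Finset.Icc 1 K,
          ENNReal.ofReal ((n c + γ) * (Real.exp (lam * (m c : ℝ)) / ZH)) •
            Measure.dirac c)
        + ENNReal.ofReal (V * γ / ZH) • G₀ :=
  mrfc_mfm_polya_urn_general K n γ lam V ZH hZ m G₀ hG₀ H hH
end

section
/- Let Y₁, Y₂, … be independent and identically distributed nonnegative real random variables with 0 < E[Y₁] < ∞, let F be their common CDF with quantile function Q(t) = inf{y : F(y) ≥ t}, and let L(p) = (1/E[Y₁])·∫₀^p Q(t) dt be the population Lorenz curve. For each n, let Y_{(1)} ≤ ⋯ ≤ Y_{(n)} be the order statistics of Y₁, …, Y_n and define the empirical Lorenz curve at the grid points p_k = k/n by L̂_n(p_k) = (Σ_{j=1}^k Y_{(j)})/(Σ_{j=1}^n Y_{(j)}). Then almost surely, max_{1 ≤ k ≤ n} |L̂_n(k/n) − L(k/n)| → 0 as n → ∞; that is, the empirical Lorenz curve converges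 uniformly and almost surely to the population Lorenz curve. -/
/-!
For a law `ν` on `[0, ∞)` with quantile function `Q` and truncated mean `m c = E[min X c]`,
`∫₀ᵖ Q = max_c (m c - (1 - p) c)`, the maximum being attained at `c = Q p`. For a sample of
size `n` the same identity holds with `m` replaced by the empirical truncated mean `mₙ` and
`p = k / n`, the maximum now being attained at the `k`-th order statistic. By the strong law,
almost surely `mₙ → m` at every rational; as the `mₙ` are monotone, `m` is 1-Lipschitz and
`m c → E[X]` as `c → ∞`, the convergence is uniform (Pólya). So the numerators of the empirical
Lorenz curve converge to those of the population one uniformly in `k`, and the denominators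
converge to `E[X] > 0` by the strong law.
-/

open MeasureTheory intervalIntegral Set ProbabilityTheory Filter Topology

-- Only meaningful on `(0, 1)`: for `t ≤ 0` the set is not bounded below and for `t > 1` it is
-- empty, and in both cases `sInf` returns `0`.
noncomputable def quantile (ν : Measure ℝ) (t : ℝ) : ℝ := sInf {y : ℝ | t ≤ cdf ν y}

section Quantile

variable {ν : Measure ℝ}

lemma bddBelow_setOf_le_cdf {t : ℝ} (ht : 0 < t) : BddBelow {y : ℝ | t ≤ cdf ν y} := by
  obtain ⟨y₀, hy₀⟩ :=
    ((tendsto_cdf_atBot ν).eventually (gt_mem_nhds ht)).exists_forall_of_atBot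
  refine ⟨y₀, fun y hy => ?_⟩
  by_contra! hlt
  exact (hy₀ y hlt.le).not_ge hy

lemma nonempty_setOf_le_cdf {t : ℝ} (ht : t < 1) : {y : ℝ | t ≤ cdf ν y}.Nonempty :=
  ((tendsto_cdf_atTop ν).eventually (lt_mem_nhds ht)).exists.imp fun _ => le_of_lt

lemma le_cdf_quantile {t : ℝ} (ht : t < 1) : t ≤ cdf ν (quantile ν t) := by
  have hright : ∀ y > quantile ν t, t ≤ cdf ν y := fun y hy => by
    obtain ⟨y', hy', hy'y⟩ := exists_lt_of_csInf_lt (nonempty_setOf_le_cdf ht) hy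
    exact hy'.trans (monotone_cdf ν hy'y.le)
  exact ge_of_tendsto (((cdf ν).right_continuous _).mono Ioi_subset_Ici_self).tendsto
    (eventually_nhdsWithin_of_forall hright)

lemma quantile_le_iff {t : ℝ} (ht₀ : 0 < t) (ht₁ : t < 1) {y : ℝ} :
    quantile ν t ≤ y ↔ t ≤ cdf ν y :=
  ⟨fun h => (le_cdf_quantile ht₁).trans (monotone_cdf ν h),
    fun h => csInf_le (bddBelow_setOf_le_cdf ht₀) h⟩

lemma monotoneOn_quantile : MonotoneOn (quantile ν) (Ioo 0 1) := fun _ hs _ ht hst =>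
  (quantile_le_iff hs.1 hs.2).2 (hst.trans (le_cdf_quantile ht.2))

lemma quantile_nonneg [IsProbabilityMeasure ν] (hν : ν (Iio 0) = 0) {t : ℝ} (ht : 0 < t) :
    0 ≤ quantile ν t := by
  rcases {y : ℝ | t ≤ cdf ν y}.eq_empty_or_nonempty with h | h
  · simp [quantile, h]
  refine le_csInf h fun y hy => ?_
  by_contra! hy₀
  have : cdf ν y = 0 := by
    rw [cdf_eq_real, measureReal_def, measure_mono_null (Iic_subset_Iio.2 hy₀) hν,
      ENNReal.toReal_zero]
  exact ht.not_ge (this ▸ hy)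

lemma aemeasurable_quantile : AEMeasurable (quantile ν) (volume.restrict (Ioo 0 1)) :=
  aemeasurable_restrict_of_monotoneOn measurableSet_Ioo monotoneOn_quantile

theorem map_quantile_volume_Ioo [IsProbabilityMeasure ν] :
    (volume.restrict (Ioo 0 1)).map (quantile ν) = ν := by
  refine (Measure.ext_of_Iic ν _ fun y => ?_).symm
  rw [Measure.map_apply_of_aemeasurable aemeasurable_quantile measurableSet_Iic,
    Measure.restrict_apply' measurableSet_Ioo]
  have hpre : quantile ν ⁻¹' Iic y ∩ Ioo 0 1 = Ioo 0 1 ∩ Iic (cdf ν y) := by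
    ext t
    simp only [mem_inter_iff, mem_preimage, mem_Iic]
    exact ⟨fun ⟨h, ht⟩ => ⟨ht, (quantile_le_iff ht.1 ht.2).1 h⟩,
      fun ⟨ht, h⟩ => ⟨(quantile_le_iff ht.1 ht.2).2 h, ht⟩⟩
  rw [hpre, show volume (Ioo 0 1 ∩ Iic (cdf ν y)) = volume (Ioc 0 1 ∩ Iic (cdf ν y)) from
    measure_congr (Ioo_ae_eq_Ioc.inter (ae_eq_refl _)), Ioc_inter_Iic,
    min_eq_right (cdf_le_one ν y), Real.volume_Ioc, sub_zero, ofReal_cdf]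

variable [IsProbabilityMeasure ν]

lemma integral_comp_quantile {g : ℝ → ℝ} (hg : AEStronglyMeasurable g ν) :
    ∫ t in 0..1, g (quantile ν t) = ∫ x, g x ∂ν := by
  rw [← map_quantile_volume_Ioo (ν := ν)] at hg
  rw [integral_of_le zero_le_one, integral_Ioc_eq_integral_Ioo,
    ← integral_map aemeasurable_quantile hg, map_quantile_volume_Ioo]

lemma intervalIntegrable_comp_quantile {g : ℝ → ℝ} (hg : Integrable g ν) :
    IntervalIntegrable (fun t => g (quantile ν t)) volume 0 1 := by
  rw [← map_quantile_volume_Ioo (ν := ν)] at hg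
  rw [intervalIntegrable_iff_integrableOn_Ioo_of_le zero_le_one]
  exact (integrable_map_measure hg.aestronglyMeasurable aemeasurable_quantile).1 hg

end Quantile

noncomputable def truncMean (ν : Measure ℝ) (c : ℝ) : ℝ := ∫ x, min x c ∂ν

section TruncMean

variable {ν : Measure ℝ}

lemma integrable_min_const [IsFiniteMeasure ν] (hν : Integrable id ν) (c : ℝ) :
    Integrable (fun x => min x c) ν :=
  hν.inf (integrable_const c)

lemma monotone_truncMean [IsFiniteMeasure ν] (hν : Integrable id ν) : Monotone (truncMean ν) :=
  fun _ _ h => integral_mono (integrable_min_const hν _) (integrable_min_const hν _)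
    fun x => min_le_min_left x h

lemma lipschitzWith_truncMean [IsProbabilityMeasure ν] (hν : Integrable id ν) :
    LipschitzWith 1 (truncMean ν) := by
  refine LipschitzWith.of_dist_le_mul fun c c' => ?_
  rw [NNReal.coe_one, one_mul, dist_eq_norm, truncMean, truncMean,
    ← integral_sub (integrable_min_const hν c) (integrable_min_const hν c')]
  refine (norm_integral_le_of_norm_le_const (Eventually.of_forall fun x => ?_)).trans_eq
    (by rw [probReal_univ, mul_one, dist_eq_norm])
  simpa using abs_min_sub_min_le_max x c x c'

lemma tendsto_truncMean_atTop (hν : Integrable id ν) :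
    Tendsto (truncMean ν) atTop (𝓝 (∫ x, x ∂ν)) := by
  refine tendsto_integral_filter_of_dominated_convergence (fun x => |x|)
    (Eventually.of_forall fun c => (continuous_id.min continuous_const).aestronglyMeasurable)
    ((eventually_ge_atTop 0).mono fun c hc => Eventually.of_forall fun x => ?_) hν.abs
    (Eventually.of_forall fun x => tendsto_const_nhds.congr' ?_)
  · rw [Real.norm_eq_abs, abs_le]
    exact ⟨le_min (neg_abs_le x) ((neg_nonpos.2 (abs_nonneg x)).trans hc),
      (min_le_left x c).trans (le_abs_self x)⟩
  · filter_upwards [eventually_ge_atTop x] with c hc using (min_eq_left hc).symm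

variable [IsProbabilityMeasure ν]

lemma truncMean_eq_integral_quantile (c : ℝ) :
    truncMean ν c = ∫ t in 0..1, min (quantile ν t) c :=
  (integral_comp_quantile (continuous_id.min continuous_const).aestronglyMeasurable).symm

lemma truncMean_sub_le_integral_quantile (hν : Integrable id ν) {p : ℝ} (hp₀ : 0 ≤ p)
    (hp₁ : p ≤ 1) (c : ℝ) : truncMean ν c - (1 - p) * c ≤ ∫ t in 0..p, quantile ν t := by
  have hsub : uIcc 0 p ⊆ uIcc 0 1 := uIcc_subset_uIcc_left (mem_uIcc_of_le hp₀ hp₁)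
  have hsub' : uIcc p 1 ⊆ uIcc 0 1 := uIcc_subset_uIcc_right (mem_uIcc_of_le hp₀ hp₁)
  have hmin := intervalIntegrable_comp_quantile (integrable_min_const hν c)
  have hq : IntervalIntegrable (quantile ν) volume 0 1 := intervalIntegrable_comp_quantile hν
  have hleft : ∫ t in 0..p, min (quantile ν t) c ≤ ∫ t in 0..p, quantile ν t :=
    integral_mono_on hp₀ (hmin.mono_set hsub) (hq.mono_set hsub) fun t _ => min_le_left _ _
  have hright : ∫ t in p..1, min (quantile ν t) c ≤ (1 - p) * c := by
    simpa using integral_mono_on hp₁ (hmin.mono_set hsub') intervalIntegrable_const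
      fun t _ => min_le_right (quantile ν t) c
  rw [truncMean_eq_integral_quantile,
    ← integral_add_adjacent_intervals (hmin.mono_set hsub) (hmin.mono_set hsub')]
  linarith

lemma integral_quantile_eq_truncMean_quantile_sub (hν : Integrable id ν) {p : ℝ} (hp₀ : 0 < p)
    (hp₁ : p < 1) :
    ∫ t in 0..p, quantile ν t = truncMean ν (quantile ν p) - (1 - p) * quantile ν p := by
  have hleft : ∫ t in 0..p, min (quantile ν t) (quantile ν p) = ∫ t in 0..p, quantile ν t := by
    refine intervalIntegral.integral_congr_ae (Eventually.of_forall fun t ht => min_eq_left ?_)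
    rw [uIoc_of_le hp₀.le] at ht
    exact monotoneOn_quantile ⟨ht.1, ht.2.trans_lt hp₁⟩ ⟨hp₀, hp₁⟩ ht.2
  have hright : ∫ t in p..1, min (quantile ν t) (quantile ν p) = (1 - p) * quantile ν p := by
    have hne : ∀ᵐ t : ℝ, t ≠ 1 := by simp [ae_iff]
    rw [intervalIntegral.integral_congr_ae (g := fun _ => quantile ν p) ?_,
      intervalIntegral.integral_const, smul_eq_mul]
    filter_upwards [hne] with t ht1 ht
    rw [uIoc_of_le hp₁.le] at ht
    exact min_eq_right
      (monotoneOn_quantile ⟨hp₀, hp₁⟩ ⟨hp₀.trans ht.1, ht.2.lt_of_ne ht1⟩ ht.1.le)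
  have hmin := intervalIntegrable_comp_quantile (integrable_min_const hν (quantile ν p))
  rw [truncMean_eq_integral_quantile, ← integral_add_adjacent_intervals
    (hmin.mono_set (uIcc_subset_uIcc_left (mem_uIcc_of_le hp₀.le hp₁.le)))
    (hmin.mono_set (uIcc_subset_uIcc_right (mem_uIcc_of_le hp₀.le hp₁.le))), hleft, hright]
  ring

end TruncMean

section Polya

variable {ι : Type*} {l : Filter ι} {f : ι → ℝ → ℝ} {g : ℝ → ℝ}

theorem tendstoUniformlyOn_Icc_of_monotone (hf : ∀ n, Monotone (f n)) (hg : UniformContinuous g)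
    (hfg : ∀ q : ℚ, Tendsto (fun n => f n q) l (𝓝 (g q))) (a b : ℝ) :
    TendstoUniformlyOn f g l (Icc a b) := by
  rw [Metric.tendstoUniformlyOn_iff]
  intro ε hε
  obtain ⟨h, hh, hgh⟩ := Metric.uniformContinuous_iff.1 hg (ε / 2) (half_pos hε)
  obtain ⟨M, hM⟩ := exists_nat_one_div_lt hh
  -- the grid `j / (M + 1)`, `j ∈ ℤ`, has mesh `< h` and finitely many points near `[a, b]`
  set grid : ℤ → ℚ := fun j => j / (M + 1)
  have hgrid_cast (j : ℤ) : (grid j : ℝ) = j / (M + 1) := by simp [grid]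
  have hM₀ : (0 : ℝ) < M + 1 := by positivity
  have hnear : ∀ᶠ n in l, ∀ j ∈ Finset.Icc ⌊a * (M + 1)⌋ (⌊b * (M + 1)⌋ + 1),
      dist (f n (grid j)) (g (grid j)) < ε / 2 :=
    (Finset.eventually_all _).2 fun j _ => Metric.tendsto_nhds.1 (hfg _) _ (half_pos hε)
  filter_upwards [hnear] with n hn c hc
  set j := ⌊c * (M + 1)⌋
  have hjlo : ⌊a * (M + 1)⌋ ≤ j := Int.floor_mono (mul_le_mul_of_nonneg_right hc.1 hM₀.le)
  have hjhi : j ≤ ⌊b * (M + 1)⌋ := Int.floor_mono (mul_le_mul_of_nonneg_right hc.2 hM₀.le)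
  have hj : j ∈ Finset.Icc ⌊a * (M + 1)⌋ (⌊b * (M + 1)⌋ + 1) :=
    Finset.mem_Icc.2 ⟨by omega, by omega⟩
  have hj' : j + 1 ∈ Finset.Icc ⌊a * (M + 1)⌋ (⌊b * (M + 1)⌋ + 1) :=
    Finset.mem_Icc.2 ⟨by omega, by omega⟩
  have hlo : (grid j : ℝ) ≤ c := by
    rw [hgrid_cast, div_le_iff₀ hM₀]; exact Int.floor_le _
  have hhi : c ≤ grid (j + 1) := by
    rw [hgrid_cast, le_div_iff₀ hM₀]; push_cast; exact (Int.lt_floor_add_one _).le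
  have hmesh : (grid (j + 1) : ℝ) - grid j < h := by
    rw [hgrid_cast, hgrid_cast]; push_cast; rw [← sub_div]; simpa using hM
  have hglo := hgh (a := grid j) (b := c)
    (by rw [Real.dist_eq, abs_sub_comm, abs_of_nonneg (by linarith)]; linarith)
  have hghi := hgh (a := grid (j + 1)) (b := c)
    (by rw [Real.dist_eq, abs_of_nonneg (by linarith)]; linarith)
  have hflo := hn j hj
  have hfhi := hn (j + 1) hj'
  rw [Real.dist_eq, abs_lt] at hglo hghi hflo hfhi ⊢
  constructor <;> linarith [hf n hlo, hf n hhi]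

theorem tendstoUniformlyOn_Ici_of_monotone {A : ι → ℝ} {θ : ℝ} (hf : ∀ n, Monotone (f n))
    (hg : Monotone g) (hgu : UniformContinuous g)
    (hfg : ∀ q : ℚ, Tendsto (fun n => f n q) l (𝓝 (g q)))
    (hfA : ∀ n c, f n c ≤ A n) (hA : Tendsto A l (𝓝 θ)) (hgθ : Tendsto g atTop (𝓝 θ)) (a : ℝ) :
    TendstoUniformlyOn f g l (Ici a) := by
  rw [Metric.tendstoUniformlyOn_iff]
  intro ε hε
  obtain ⟨C, hgC, haC⟩ := ((hgθ.eventually (lt_mem_nhds (sub_lt_self θ (half_pos hε)))).and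
    (eventually_ge_atTop a)).exists
  have hcompact := tendstoUniformlyOn_Icc_of_monotone hf hgu hfg a C
  filter_upwards [Metric.tendstoUniformlyOn_iff.1 hcompact ε hε,
    Metric.tendsto_nhds.1 (hcompact.tendsto_at ⟨haC, le_rfl⟩) _ (half_pos hε),
    Metric.tendsto_nhds.1 hA _ (half_pos hε)] with n hnear hfC hAn c hc
  rcases le_total c C with hcC | hCc
  · exact hnear c ⟨hc, hcC⟩
  -- beyond `C` both `f n` and `g` are squeezed into intervals of length `< ε / 2` near `θ`
  rw [Real.dist_eq, abs_lt] at hfC hAn ⊢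
  constructor <;> linarith [hg hCc, hg.ge_of_tendsto hgθ c, hf n hCc, hfA n c]

end Polya

section SortedSums

lemma sum_map_min_sub_le_sum_take (l : List ℝ) {k : ℕ} (hk : k ≤ l.length) (c : ℝ) :
    (l.map (min · c)).sum - (l.length - k) * c ≤ (l.take k).sum := by
  have hdrop : ((l.drop k).map (min · c)).sum ≤ (l.length - k) * c := by
    have := List.sum_le_card_nsmul ((l.drop k).map (min · c)) c
      (by rintro _ hx; obtain ⟨x, -, rfl⟩ := List.mem_map.1 hx; exact min_le_right x c)
    simpa [Nat.cast_sub hk] using this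
  have htake : ((l.take k).map (min · c)).sum ≤ (l.take k).sum := by
    simpa using List.sum_le_sum (l := l.take k) (g := id) fun x _ => min_le_left x c
  rw [← List.take_append_drop k l, List.map_append, List.sum_append, List.take_append_drop]
  linarith

lemma sum_take_eq_sum_map_min_sub (l : List ℝ) (hl : l.Pairwise (· ≤ ·)) {k : ℕ} (hk₀ : 0 < k)
    (hk : k ≤ l.length) :
    (l.take k).sum = (l.map (min · l[k - 1])).sum - (l.length - k) * l[k - 1] := by
  have hle_take : ∀ x ∈ l.take k, x ≤ l[k - 1] := by
    intro x hx
    obtain ⟨i, hi, rfl⟩ := List.mem_take_iff_getElem.1 hx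
    simpa using hl.rel_get_of_le (a := ⟨i, by omega⟩) (b := ⟨k - 1, by omega⟩)
      (Fin.mk_le_mk.2 (by omega))
  have hge_drop : ∀ x ∈ l.drop k, l[k - 1] ≤ x := by
    intro x hx
    obtain ⟨i, hi, rfl⟩ := List.mem_drop_iff_getElem.1 hx
    simpa using hl.rel_get_of_le (a := ⟨k - 1, by omega⟩) (b := ⟨k + i, by omega⟩)
      (Fin.mk_le_mk.2 (by omega))
  generalize l[k - 1] = c at hle_take hge_drop ⊢
  have htake : (l.take k).map (min · c) = l.take k := by
    conv_rhs => rw [← List.map_id (l.take k)]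
    exact List.map_congr_left fun x hx => min_eq_left (hle_take x hx)
  have hdrop : (l.drop k).map (min · c) = List.replicate (l.length - k) c := by
    rw [List.map_congr_left fun x hx => min_eq_right (hge_drop x hx), List.map_const',
      List.length_drop]
  rw [← List.take_append_drop k l, List.map_append, List.sum_append, htake, hdrop,
    List.sum_replicate, List.take_append_drop, nsmul_eq_mul, Nat.cast_sub hk]
  ring

end SortedSums

section Lorenz

variable {ν : Measure ℝ} [IsProbabilityMeasure ν]

lemma integral_quantile_nonneg (hν₀ : ν (Iio 0) = 0) {p : ℝ} (hp : 0 ≤ p) :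
    0 ≤ ∫ t in 0..p, quantile ν t := by
  have hne : ∀ᵐ t : ℝ, t ≠ 0 := by simp [ae_iff]
  refine integral_nonneg_of_ae_restrict hp ((ae_restrict_iff' measurableSet_Icc).2 ?_)
  filter_upwards [hne] with t ht0 ht
  exact quantile_nonneg hν₀ (ht.1.lt_of_ne' ht0)

lemma integral_quantile_zero_one : ∫ t in 0..1, quantile ν t = ∫ x, x ∂ν :=
  integral_comp_quantile (g := fun x => x) aestronglyMeasurable_id

lemma integral_quantile_le_integral (hν : Integrable id ν) (hν₀ : ν (Iio 0) = 0) {p : ℝ}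
    (hp₀ : 0 ≤ p) (hp₁ : p ≤ 1) : ∫ t in 0..p, quantile ν t ≤ ∫ x, x ∂ν := by
  rw [← integral_quantile_zero_one]
  exact integral_mono_interval le_rfl hp₀ hp₁
    ((ae_restrict_iff' measurableSet_Ioc).2
      (Eventually.of_forall fun t ht => quantile_nonneg hν₀ ht.1))
    (intervalIntegrable_comp_quantile hν)

lemma abs_sum_take_div_sub_integral_quantile_le (hν : Integrable id ν) (hν₀ : ν (Iio 0) = 0)
    {l : List ℝ} (hl : l.Pairwise (· ≤ ·)) (hl₀ : ∀ x ∈ l, 0 ≤ x) {k : ℕ} (hk₀ : 0 < k)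
    (hk : k ≤ l.length) {δ : ℝ}
    (htrunc : ∀ c, 0 ≤ c → |(l.map (min · c)).sum / l.length - truncMean ν c| ≤ δ)
    (hsum : |l.sum / l.length - ∫ x, x ∂ν| ≤ δ) :
    |(l.take k).sum / l.length - ∫ t in 0..(k / l.length : ℝ), quantile ν t| ≤ δ := by
  have hn : (0 : ℝ) < l.length := by exact_mod_cast hk₀.trans_le hk
  rcases hk.eq_or_lt with rfl | hlt
  · rwa [List.take_length, div_self hn.ne', integral_quantile_zero_one]
  set p : ℝ := k / l.length
  have hp₀ : 0 < p := by positivity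
  have hp₁ : p < 1 := (div_lt_one hn).2 (by exact_mod_cast hlt)
  have hscale (c : ℝ) : ((l.length : ℝ) - k) * c / l.length = (1 - p) * c := by
    simp only [p]
    field_simp
  have hupper : (l.take k).sum / l.length ≤ (∫ t in 0..p, quantile ν t) + δ := by
    have hc₀ : 0 ≤ l[k - 1] := hl₀ _ (List.getElem_mem _)
    rw [sum_take_eq_sum_map_min_sub l hl hk₀ hk, sub_div, hscale]
    linarith [(abs_le.1 (htrunc _ hc₀)).2,
      truncMean_sub_le_integral_quantile hν hp₀.le hp₁.le l[k - 1]]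
  have hlower : (∫ t in 0..p, quantile ν t) ≤ (l.take k).sum / l.length + δ := by
    have := div_le_div_of_nonneg_right (sum_map_min_sub_le_sum_take l hk (quantile ν p)) hn.le
    rw [sub_div, hscale] at this
    rw [integral_quantile_eq_truncMean_quantile_sub hν hp₀ hp₁]
    linarith [(abs_le.1 (htrunc _ (quantile_nonneg hν₀ hp₀))).1]
  exact abs_le.2 ⟨by linarith, by linarith⟩

end Lorenz

lemma abs_div_sub_div_le {a b A θ δ : ℝ} (hθ : 0 < θ) (hb₀ : 0 ≤ b) (hbθ : b ≤ θ)
    (ha : |a - b| ≤ δ) (hA : |A - θ| ≤ δ) (hδ : δ ≤ θ / 2) : |a / A - b / θ| ≤ 4 * δ / θ := by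
  have hA₀ : θ / 2 ≤ A := by linarith [(abs_le.1 hA).1]
  have hApos : 0 < A := by linarith
  have hnum : |(a - b) * θ + b * (θ - A)| ≤ 2 * δ * θ := by
    calc |(a - b) * θ + b * (θ - A)| ≤ |a - b| * θ + b * |A - θ| := by
          refine (abs_add_le _ _).trans_eq ?_
          rw [abs_mul, abs_mul, abs_of_pos hθ, abs_of_nonneg hb₀, abs_sub_comm θ]
      _ ≤ δ * θ + θ * δ := by gcongr
      _ = 2 * δ * θ := by ring
  have hkey : a / A - b / θ = ((a - b) * θ + b * (θ - A)) / (A * θ) := by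
    field_simp
    ring
  have hδ₀ : 0 ≤ δ := (abs_nonneg _).trans ha
  rw [hkey, abs_div, abs_of_pos (mul_pos hApos hθ)]
  calc |(a - b) * θ + b * (θ - A)| / (A * θ) ≤ 2 * δ * θ / (θ / 2 * θ) :=
        div_le_div₀ (by positivity) hnum (by positivity) (by gcongr)
    _ = 4 * δ / θ := by field_simp; ring

noncomputable def lorenzCurve (ν : Measure ℝ) (p : ℝ) : ℝ :=
  (1 / ∫ x, x ∂ν) * ∫ t in 0..p, quantile ν t

noncomputable def empiricalLorenz (y : ℕ → ℝ) (n k : ℕ) : ℝ :=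
  (((List.ofFn fun i : Fin n => y i).insertionSort (· ≤ ·)).take k).sum /
    (List.ofFn fun i : Fin n => y i).sum

lemma sum_map_insertionSort_ofFn (y : ℕ → ℝ) (n : ℕ) (f : ℝ → ℝ) :
    (((List.ofFn fun i : Fin n => y i).insertionSort (· ≤ ·)).map f).sum =
      ∑ i ∈ Finset.range n, f (y i) := by
  rw [((List.perm_insertionSort _ _).map f).sum_eq, List.map_ofFn, List.sum_ofFn]
  exact Fin.sum_univ_eq_sum_range (fun i => f (y i)) n

section SamplePath

variable {ν : Measure ℝ} [IsProbabilityMeasure ν] {y : ℕ → ℝ}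

lemma tendstoUniformlyOn_average_min (hν : Integrable id ν)
    (havg : Tendsto (fun n : ℕ => (∑ i ∈ Finset.range n, y i) / n) atTop (𝓝 (∫ x, x ∂ν)))
    (htrunc : ∀ q : ℚ, Tendsto (fun n : ℕ => (∑ i ∈ Finset.range n, min (y i) q) / n) atTop
      (𝓝 (truncMean ν q))) :
    TendstoUniformlyOn (fun (n : ℕ) c => (∑ i ∈ Finset.range n, min (y i) c) / n)
      (truncMean ν) atTop (Ici 0) :=
  tendstoUniformlyOn_Ici_of_monotone
    (f := fun (n : ℕ) c => (∑ i ∈ Finset.range n, min (y i) c) / n)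
    (A := fun n : ℕ => (∑ i ∈ Finset.range n, y i) / n)
    (fun n _ _ h => div_le_div_of_nonneg_right
      (Finset.sum_le_sum fun _ _ => min_le_min_left _ h) n.cast_nonneg)
    (monotone_truncMean hν) (lipschitzWith_truncMean hν).uniformContinuous htrunc
    (fun n _ => div_le_div_of_nonneg_right
      (Finset.sum_le_sum fun _ _ => min_le_left _ _) n.cast_nonneg)
    havg (tendsto_truncMean_atTop hν) 0

theorem empiricalLorenz_tendsto_lorenzCurve (hν : Integrable id ν) (hν₀ : ν (Iio 0) = 0)
    (hθ : 0 < ∫ x, x ∂ν) (hy₀ : ∀ i, 0 ≤ y i)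
    (havg : Tendsto (fun n : ℕ => (∑ i ∈ Finset.range n, y i) / n) atTop (𝓝 (∫ x, x ∂ν)))
    (htrunc : ∀ q : ℚ, Tendsto (fun n : ℕ => (∑ i ∈ Finset.range n, min (y i) q) / n) atTop
      (𝓝 (truncMean ν q))) :
    ∀ ε > 0, ∃ N : ℕ, ∀ n ≥ N, ∀ k : ℕ, 1 ≤ k → k ≤ n →
      |empiricalLorenz y n k - lorenzCurve ν ((k : ℝ) / (n : ℝ))| < ε := by
  intro ε hε
  set θ := ∫ x, x ∂ν
  set δ := min (θ / 2) (ε * θ / 8)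
  have hδ : 0 < δ := lt_min (by positivity) (by positivity)
  obtain ⟨N, hN⟩ := ((Metric.tendstoUniformlyOn_iff.1
    (tendstoUniformlyOn_average_min hν havg htrunc) δ hδ).and
    (havg.eventually (Metric.closedBall_mem_nhds θ hδ))).exists_forall_of_atTop
  refine ⟨N, fun n hn k hk₁ hkn => ?_⟩
  obtain ⟨hunif, hA⟩ := hN n hn
  set l := (List.ofFn fun i : Fin n => y i).insertionSort (· ≤ ·)
  have hlen : l.length = n := by simp [l]
  have hsum : l.sum = ∑ i ∈ Finset.range n, y i := by
    simpa using sum_map_insertionSort_ofFn y n id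
  have hb := abs_sum_take_div_sub_integral_quantile_le hν hν₀ (List.pairwise_insertionSort _ _)
    (fun x hx => by
      obtain ⟨i, rfl⟩ := List.mem_ofFn.1 ((List.perm_insertionSort _ _).mem_iff.1 hx)
      exact hy₀ i)
    hk₁ (hlen ▸ hkn) (δ := δ)
    (fun c hc => by
      rw [sum_map_insertionSort_ofFn, hlen, abs_sub_comm, ← Real.dist_eq]
      exact (hunif c hc).le)
    (by rw [hsum, hlen, ← Real.dist_eq]; exact hA)
  rw [hlen] at hb
  have hn₀ : (n : ℝ) ≠ 0 := by exact_mod_cast (Nat.one_le_iff_ne_zero.1 (hk₁.trans hkn))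
  have hsplit : empiricalLorenz y n k = ((l.take k).sum / n) / (l.sum / n) := by
    rw [empiricalLorenz, div_div_div_cancel_right₀ hn₀, (List.perm_insertionSort _ _).sum_eq]
  rw [hsplit, lorenzCurve, one_div_mul_eq_div]
  have hp₀ : (0 : ℝ) ≤ k / n := by positivity
  have hp₁ : (k : ℝ) / n ≤ 1 := div_le_one_of_le₀ (by exact_mod_cast hkn) (Nat.cast_nonneg n)
  refine (abs_div_sub_div_le hθ (integral_quantile_nonneg hν₀ hp₀)
    (integral_quantile_le_integral hν hν₀ hp₀ hp₁) hb (by rw [hsum, ← Real.dist_eq]; exact hA)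
    (min_le_left _ _)).trans_lt ?_
  calc 4 * δ / θ ≤ 4 * (ε * θ / 8) / θ := by gcongr; exact min_le_right _ _
    _ < ε := by field_simp; linarith

end SamplePath

lemma ae_tendsto_average_comp {Ω E : Type*} [MeasurableSpace Ω] [MeasurableSpace E]
    {μ : Measure Ω} {Y : ℕ → Ω → E} (hindep : iIndepFun Y μ)
    (hident : ∀ i, IdentDistrib (Y i) (Y 0) μ μ) {φ : E → ℝ} (hφ : Measurable φ)
    (hint : Integrable φ (μ.map (Y 0))) :
    ∀ᵐ ω ∂μ, Tendsto (fun n : ℕ => (∑ i ∈ Finset.range n, φ (Y i ω)) / n) atTop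
      (𝓝 (∫ x, φ x ∂(μ.map (Y 0)))) := by
  have hY₀ := (hident 0).aemeasurable_fst
  rw [integral_map hY₀ hφ.aestronglyMeasurable]
  exact strong_law_ae_real (fun i => φ ∘ Y i)
    ((integrable_map_measure hφ.aestronglyMeasurable hY₀).1 hint)
    (fun i j hij => (hindep.indepFun hij).comp hφ hφ) (fun i => (hident i).comp hφ)

/-- Uniform almost-sure convergence of the empirical Lorenz curve
(Goldie/Gastwirth): for i.i.d. nonnegative `Y₁, Y₂, …` with `0 < E[Y₁] < ∞`,
quantile function `Q t = inf {y | F y ≥ t}` and population Lorenz curve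
`L p = (1/E[Y₁]) ∫₀ᵖ Q`, the empirical Lorenz curve
`L̂ₙ(k/n) = (sum of k smallest of Y₁,…,Yₙ)/(Y₁+⋯+Yₙ)` satisfies, almost surely,
`max_{1 ≤ k ≤ n} |L̂ₙ(k/n) − L(k/n)| → 0` as `n → ∞`. -/
theorem empirical_lorenz_uniform_as_convergence
    {Ω : Type*} [MeasurableSpace Ω] (μ : Measure Ω) [IsProbabilityMeasure μ]
    (Y : ℕ → Ω → ℝ)
    (hmeas : ∀ i, Measurable (Y i))
    (hindep : ProbabilityTheory.iIndepFun Y μ)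
    (hident : ∀ i, Measure.map (Y i) μ = Measure.map (Y 0) μ)
    (hnonneg : ∀ i ω, 0 ≤ Y i ω)
    (hint : Integrable (Y 0) μ)
    (hmean : 0 < ∫ ω, Y 0 ω ∂μ)
    (F : ℝ → ℝ) (hF : ∀ y, F y = (μ {ω | Y 0 ω ≤ y}).toReal)
    (Q : ℝ → ℝ) (hQ : ∀ t, Q t = sInf {y : ℝ | t ≤ F y})
    (L : ℝ → ℝ)
    (hL : ∀ p, L p = (1 / ∫ ω, Y 0 ω ∂μ) * ∫ t in (0:ℝ)..p, Q t)
    (Lhat : ℕ → ℕ → Ω → ℝ)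
    (hLhat : ∀ n k ω, Lhat n k ω =
      (((List.ofFn fun i : Fin n => Y i ω).insertionSort (· ≤ ·)).take k).sum /
        ((List.ofFn fun i : Fin n => Y i ω)).sum) :
    ∀ᵐ ω ∂μ, ∀ ε > 0, ∃ N : ℕ, ∀ n ≥ N, ∀ k : ℕ, 1 ≤ k → k ≤ n →
      |Lhat n k ω - L ((k : ℝ) / (n : ℝ))| < ε := by
  set ν := μ.map (Y 0)
  have hY₀ : AEMeasurable (Y 0) μ := (hmeas 0).aemeasurable
  have : IsProbabilityMeasure ν := Measure.isProbabilityMeasure_map hY₀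
  have hident' (i : ℕ) : IdentDistrib (Y i) (Y 0) μ μ := ⟨(hmeas i).aemeasurable, hY₀, hident i⟩
  have hν : Integrable id ν := (integrable_map_measure aestronglyMeasurable_id hY₀).2 hint
  have hν₀ : ν (Iio 0) = 0 := by
    rw [Measure.map_apply (hmeas 0) measurableSet_Iio,
      (eq_empty_iff_forall_notMem (s := Y 0 ⁻¹' Iio 0)).2 fun ω hω => (hnonneg 0 ω).not_gt hω,
      measure_empty]
  have hθ : ∫ x, x ∂ν = ∫ ω, Y 0 ω ∂μ := integral_map hY₀ aestronglyMeasurable_id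
  have hQν : Q = quantile ν := funext fun t => by
    simp only [hQ, hF, quantile, cdf_eq_real, measureReal_def, ν,
      Measure.map_apply (hmeas 0) measurableSet_Iic]
    rfl
  have hL' : L = lorenzCurve ν := funext fun p => by rw [hL, lorenzCurve, hθ, hQν]
  filter_upwards [ae_tendsto_average_comp hindep hident' measurable_id hν,
    ae_all_iff.2 fun q : ℚ => ae_tendsto_average_comp hindep hident'
      (measurable_id.min measurable_const) (integrable_min_const hν q)] with ω hω htrunc
  simp only [hLhat, hL']
  exact empiricalLorenz_tendsto_lorenzCurve hν hν₀ (hθ ▸ hmean) (fun i => hnonneg i ω) hω htrunc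
end
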